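/- Let $\phi\in\mathbb{B}^+$, $\rho>0$ and $h\in\mathbb{B}^+$ satisfy $P_\phi h=\rho h$ pointwise, and define the normalized weights $v_i(x)=\phi(\tau_i(x))h(\tau_i(x))/(\rho h(x))$ for $i=0,\dots,d-1$ (so that $\sum_{i=0}^{d-1}v_i=1$). Let $\nu$ be a Borel probability measure on $[0,1]$ such that $\int\sum_{i=0}^{d-1}v_i(x)f(\tau_i(x))\,d\nu(x)=\int f\,d\nu$ for every bounded Borel $f:[0,1]\to\mathbb{R}$. Then $-\int\sum_{i=0}^{d-1}v_i\ln v_i\,d\nu+\int\ln\phi\,d\nu=\ln\rho$. -/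

import Mathlib

open MeasureTheory

noncomputable section

/-- `f ∈ 𝔹⁺` : Borel measurable and bounded away from `0` and `∞`. -/
def MemBplus (f : unitInterval → ℝ) : Prop :=
  Measurable f ∧ ∃ c C : ℝ, 0 < c ∧ (∀ x, c ≤ f x) ∧ (∀ x, f x ≤ C)

/-! Since `P_φ h = ρ h`, the weights are `v_i(x) = ψ(τ_i x) / ∑_j ψ(τ_j x)` with `ψ = φ h`, so
`∑ v_i log v_i = ∑ v_i log ψ(τ_i ·) - log (ρ h)`. Invariance of `ν` turns the integral of the
first term into `∫ log φ + ∫ log h`, and `∫ log h` cancels against `∫ log (ρ h)`. -/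

open Finset Real

theorem Real.sum_div_sum_mul_log_div_sum {ι : Type*} (s : Finset ι) (a : ι → ℝ) :
    ∑ i ∈ s, a i / (∑ j ∈ s, a j) * log (a i / ∑ j ∈ s, a j)
      = ∑ i ∈ s, a i / (∑ j ∈ s, a j) * log (a i) - log (∑ j ∈ s, a j) := by
  set S := ∑ j ∈ s, a j
  have hterm : ∀ i ∈ s, a i / S * log (a i / S) = a i / S * log (a i) - a i / S * log S := by
    intro i _
    rcases eq_or_ne (a i) 0 with hai | hai
    · simp [hai]
    rcases eq_or_ne S 0 with hS | hS
    · simp [hS]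
    rw [log_div hai hS]
    ring
  have hweights : ∑ i ∈ s, a i / S * log S = log S := by
    rw [← sum_mul, ← sum_div]
    rcases eq_or_ne S 0 with hS | hS
    · simp [hS]
    · rw [div_self hS, one_mul]
  rw [sum_congr rfl hterm, sum_sub_distrib, hweights]

section BoundedMeasurable

variable {α : Type*} [MeasurableSpace α] {μ : Measure α} [IsFiniteMeasure μ]

theorem integrable_of_abs_le {f : α → ℝ} (hf : Measurable f) (hf_bdd : ∃ C, ∀ x, |f x| ≤ C) :
    Integrable f μ :=
  let ⟨C, hC⟩ := hf_bdd
  .of_bound hf.aestronglyMeasurable C (ae_of_all _ hC)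

theorem integrable_sum_mul_comp {ι : Type*} [Fintype ι] {τ : ι → α → α}
    (hτ : ∀ i, Measurable (τ i)) {w : ι → α → ℝ} (hw : ∀ i, Measurable (w i))
    (hw_bdd : ∀ i, ∃ C, ∀ x, |w i x| ≤ C) {f : α → ℝ} (hf : Measurable f)
    (hf_bdd : ∃ C, ∀ x, |f x| ≤ C) :
    Integrable (fun x => ∑ i, w i x * f (τ i x)) μ := by
  refine integrable_finsetSum _ fun i _ => ?_
  obtain ⟨C, hC⟩ := hw_bdd i
  obtain ⟨K, hK⟩ := hf_bdd
  exact (integrable_of_abs_le (hf.comp (hτ i)) ⟨K, fun x => hK (τ i x)⟩).bdd_mul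
    (hw i).aestronglyMeasurable (ae_of_all _ hC)

end BoundedMeasurable

namespace MemBplus

variable {f g : unitInterval → ℝ}

theorem pos (hf : MemBplus f) (x : unitInterval) : 0 < f x :=
  let ⟨_, _, _, hc, hcf, _⟩ := hf
  hc.trans_le (hcf x)

theorem exists_abs_le (hf : MemBplus f) : ∃ C, ∀ x, |f x| ≤ C :=
  let ⟨_, _, C, _, _, hfC⟩ := hf
  ⟨C, fun x => (abs_of_pos (hf.pos x)).trans_le (hfC x)⟩

theorem const {r : ℝ} (hr : 0 < r) : MemBplus fun _ => r :=
  ⟨measurable_const, r, r, hr, fun _ => le_rfl, fun _ => le_rfl⟩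

theorem mul (hf : MemBplus f) (hg : MemBplus g) : MemBplus fun x => f x * g x := by
  obtain ⟨hfm, cf, Cf, hcf, hfc, hfC⟩ := hf
  obtain ⟨hgm, cg, Cg, hcg, hgc, hgC⟩ := hg
  refine ⟨hfm.mul hgm, cf * cg, Cf * Cg, mul_pos hcf hcg, fun x => ?_, fun x => ?_⟩
  · exact mul_le_mul (hfc x) (hgc x) hcg.le (hcf.trans_le (hfc x)).le
  · exact mul_le_mul (hfC x) (hgC x) (hcg.trans_le (hgc x)).le
      ((hcf.trans_le (hfc x)).le.trans (hfC x))

theorem inv (hf : MemBplus f) : MemBplus fun x => (f x)⁻¹ := by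
  obtain ⟨hfm, c, C, hc, hfc, hfC⟩ := hf
  refine ⟨hfm.inv, C⁻¹, c⁻¹, inv_pos.2 (hc.trans_le ((hfc 0).trans (hfC 0))),
    fun x => ?_, fun x => ?_⟩
  · exact inv_anti₀ (hc.trans_le (hfc x)) (hfC x)
  · exact inv_anti₀ hc (hfc x)

theorem div (hf : MemBplus f) (hg : MemBplus g) : MemBplus fun x => f x / g x := by
  simpa only [div_eq_mul_inv] using hf.mul hg.inv

theorem comp (hf : MemBplus f) {τ : unitInterval → unitInterval} (hτ : Measurable τ) :
    MemBplus fun x => f (τ x) :=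
  let ⟨hfm, c, C, hc, hfc, hfC⟩ := hf
  ⟨hfm.comp hτ, c, C, hc, fun x => hfc (τ x), fun x => hfC (τ x)⟩

theorem exists_abs_log_le (hf : MemBplus f) : ∃ K, ∀ x, |log (f x)| ≤ K := by
  obtain ⟨_, c, C, hc, hfc, hfC⟩ := hf
  refine ⟨|log c| + |log C|, fun x => abs_le.2 ⟨?_, ?_⟩⟩
  · have := log_le_log hc (hfc x)
    linarith [neg_abs_le (log c), abs_nonneg (log C)]
  · have := log_le_log (hc.trans_le (hfc x)) (hfC x)
    linarith [le_abs_self (log C), abs_nonneg (log c)]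

theorem integrable_log (hf : MemBplus f) (μ : Measure unitInterval) [IsFiniteMeasure μ] :
    Integrable (fun x => log (f x)) μ :=
  integrable_of_abs_le hf.1.log hf.exists_abs_log_le

end MemBplus

theorem stmt18_general {d : ℕ} (τ : Fin d → unitInterval → unitInterval)
    (hτ : ∀ i, Continuous (τ i))
    (φ : unitInterval → ℝ) (hφ : MemBplus φ)
    (ρ : ℝ) (hρ : 0 < ρ) (h : unitInterval → ℝ) (hh : MemBplus h)
    (heig : ∀ x, (∑ i : Fin d, φ (τ i x) * h (τ i x)) = ρ * h x)
    (v : Fin d → unitInterval → ℝ)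
    (hv : ∀ i x, v i x = φ (τ i x) * h (τ i x) / (ρ * h x))
    (ν : Measure unitInterval) [IsProbabilityMeasure ν]
    (hinv : ∀ f : unitInterval → ℝ, Measurable f → (∃ C : ℝ, ∀ x, |f x| ≤ C) →
      (∫ x, ∑ i : Fin d, v i x * f (τ i x) ∂ν) = ∫ x, f x ∂ν) :
    (-(∫ x, ∑ i : Fin d, v i x * Real.log (v i x) ∂ν))
      + (∫ x, Real.log (φ x) ∂ν) = Real.log ρ := by
  have hψ : MemBplus fun y => φ y * h y := hφ.mul hh
  have hρh : MemBplus fun x => ρ * h x := (MemBplus.const hρ).mul hh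
  have hv_mem : ∀ i, MemBplus (v i) := fun i => by
    rw [funext (hv i)]
    exact (hψ.comp (hτ i).measurable).div hρh
  have hentropy : ∀ x, ∑ i, v i x * log (v i x)
      = ∑ i, v i x * log (φ (τ i x) * h (τ i x)) - log (ρ * h x) := fun x => by
    simp only [hv, ← heig x]
    exact sum_div_sum_mul_log_div_sum _ _
  have hlog_ρh : ∀ x, log (ρ * h x) = log ρ + log (h x) := fun x =>
    log_mul hρ.ne' (hh.pos x).ne'
  have hlog_ψ : ∀ x, log (φ x * h x) = log (φ x) + log (h x) := fun x =>
    log_mul (hφ.pos x).ne' (hh.pos x).ne'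
  have hsum_int : Integrable (fun x => ∑ i, v i x * log (φ (τ i x) * h (τ i x))) ν :=
    integrable_sum_mul_comp (fun i => (hτ i).measurable) (fun i => (hv_mem i).1)
      (fun i => (hv_mem i).exists_abs_le) hψ.1.log hψ.exists_abs_log_le
  rw [integral_congr_ae (ae_of_all _ hentropy), integral_sub hsum_int (hρh.integrable_log ν),
    hinv _ hψ.1.log hψ.exists_abs_log_le]
  simp only [hlog_ψ, hlog_ρh]
  rw [integral_add (hφ.integrable_log ν) (hh.integrable_log ν),
    integral_add (integrable_const _) (hh.integrable_log ν), integral_const, probReal_univ,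
    one_smul]
  ring

theorem stmt18 {d : ℕ} (hd : 1 ≤ d) (τ : Fin d → unitInterval → unitInterval)
    (hτ : ∀ i, Continuous (τ i))
    (φ : unitInterval → ℝ) (hφ : MemBplus φ)
    (ρ : ℝ) (hρ : 0 < ρ) (h : unitInterval → ℝ) (hh : MemBplus h)
    (heig : ∀ x, (∑ i : Fin d, φ (τ i x) * h (τ i x)) = ρ * h x)
    (v : Fin d → unitInterval → ℝ)
    (hv : ∀ i x, v i x = φ (τ i x) * h (τ i x) / (ρ * h x))
    (ν : Measure unitInterval) [IsProbabilityMeasure ν]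
    (hinv : ∀ f : unitInterval → ℝ, Measurable f → (∃ C : ℝ, ∀ x, |f x| ≤ C) →
      (∫ x, ∑ i : Fin d, v i x * f (τ i x) ∂ν) = ∫ x, f x ∂ν) :
    (-(∫ x, ∑ i : Fin d, v i x * Real.log (v i x) ∂ν))
      + (∫ x, Real.log (φ x) ∂ν) = Real.log ρ :=
  stmt18_general τ hτ φ hφ ρ hρ h hh heig v hv ν hinv
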